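/- arXiv:1203.4793 — 9 statements merged into one kernel-verified Lean document; each statement's English description precedes it below -/
import Mathlib

section
/- Let r ≥ 1, let s be an integer with 1 ≤ s ≤ r, and let σ be a permutation of {1,…,r}. Then the following are equivalent: (i) there exists a subset S of {1,…,r} with |S| = s such that σ(i) ≤ i for all i ∈ S and σ(i) ≥ i for all i ∉ S; (ii) #{i : σ(i) < i} ≤ s and #{i : σ(i) > i} ≤ r − s. -/
open scoped BigOperators

namespace PermStats

/-- The number of drops `c_<(σ) = #{i : σ(i) < i}` of a permutation of `Fin r`. -/
def drops {r : ℕ} (σ : Equiv.Perm (Fin r)) : ℕ :=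
  (Finset.univ.filter fun i => σ i < i).card

/-- The number of jumps `c_>(σ) = #{i : σ(i) > i}` of a permutation of `Fin r`. -/
def jumps {r : ℕ} (σ : Equiv.Perm (Fin r)) : ℕ :=
  (Finset.univ.filter fun i => i < σ i).card

/-- The height `ht(σ) = ∑_i |σ(i) - i|` of a permutation of `Fin r`. -/
def ht {r : ℕ} (σ : Equiv.Perm (Fin r)) : ℕ :=
  ∑ i : Fin r, Nat.dist ((σ i : ℕ)) (i : ℕ)

/-- For `1 ≤ s ≤ r` and a permutation `σ` of `{1,…,r}` (modelled as
`Fin r`), there is a subset `S` of size `s` with `σ(i) ≤ i` on `S` and `σ(i) ≥ i` off `S`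
iff `c_<(σ) ≤ s` and `c_>(σ) ≤ r - s`. -/
theorem exists_subset_iff_drops_jumps (r s : ℕ) (hr : 1 ≤ r) (hs1 : 1 ≤ s) (hsr : s ≤ r)
    (σ : Equiv.Perm (Fin r)) :
    (∃ S : Finset (Fin r), S.card = s ∧ (∀ i ∈ S, σ i ≤ i) ∧ ∀ i ∉ S, i ≤ σ i) ↔
      (drops σ ≤ s ∧ jumps σ ≤ r - s) := by
  classical
  constructor
  · rintro ⟨S, hcard, hS, hSc⟩
    constructor
    · apply le_trans (Finset.card_le_card ?_) hcard.le
      intro i hi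
      simp only [Finset.mem_filter, Finset.mem_univ, true_and] at hi
      by_contra h
      exact absurd (hSc i h) (not_le.mpr hi)
    · have : (Finset.univ.filter fun i => i < σ i) ⊆ Sᶜ := by
        intro i hi
        simp only [Finset.mem_filter, Finset.mem_univ, true_and] at hi
        simp only [Finset.mem_compl]
        intro h
        exact absurd (hS i h) (not_le.mpr hi)
      have := Finset.card_le_card this
      rwa [Finset.card_compl, Fintype.card_fin, hcard] at this
  · rintro ⟨hd, hj⟩
    set D := Finset.univ.filter fun i : Fin r => σ i < i with hD
    set J := Finset.univ.filter fun i : Fin r => i < σ i with hJ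
    set F := Finset.univ.filter fun i : Fin r => σ i = i with hF
    have hdD : drops σ = D.card := rfl
    have hjJ : jumps σ = J.card := rfl
    have hDF : Disjoint D F := by
      rw [Finset.disjoint_left]
      intro i hi hi'
      simp only [hD, hF, Finset.mem_filter, Finset.mem_univ, true_and] at hi hi'
      exact absurd hi' (ne_of_lt hi)
    have hJS : Disjoint J (D ∪ F) := by
      rw [Finset.disjoint_left]
      intro i hi hi'
      simp only [hJ, hD, hF, Finset.mem_union, Finset.mem_filter, Finset.mem_univ,
        true_and] at hi hi'
      rcases hi' with h | h
      · exact absurd hi (not_lt.mpr h.le)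
      · exact absurd hi (not_lt.mpr h.le)
    have hunion : D ∪ F ∪ J = Finset.univ := by
      ext i
      simp only [hJ, hD, hF, Finset.mem_union, Finset.mem_filter, Finset.mem_univ,
        true_and, iff_true]
      rcases lt_trichotomy (σ i) i with h | h | h
      · exact Or.inl (Or.inl h)
      · exact Or.inl (Or.inr h)
      · exact Or.inr h
    have hcards : D.card + F.card + J.card = r := by
      rw [← Finset.card_union_of_disjoint hDF, ← Finset.card_union_of_disjoint hJS.symm,
        hunion, Finset.card_univ, Fintype.card_fin]
    have hF_big : s - D.card ≤ F.card := by omega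
    obtain ⟨T, hTF, hTcard⟩ := Finset.exists_subset_card_eq hF_big
    refine ⟨D ∪ T, ?_, ?_, ?_⟩
    · rw [Finset.card_union_of_disjoint (hDF.mono_right hTF), hTcard]
      omega
    · intro i hi
      rcases Finset.mem_union.mp hi with h | h
      · simp only [hD, Finset.mem_filter] at h
        exact h.2.le
      · have := hTF h
        simp only [hF, Finset.mem_filter] at this
        exact this.2.le
    · intro i hi
      simp only [Finset.mem_union, not_or] at hi
      have hiJ : i ∈ J ∪ (F \ T) := by
        have h0 : i ∈ D ∪ F ∪ J := hunion ▸ Finset.mem_univ i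
        rcases Finset.mem_union.mp h0 with h | h
        · rcases Finset.mem_union.mp h with h | h
          · exact absurd h hi.1
          · exact Finset.mem_union_right _ (Finset.mem_sdiff.mpr ⟨h, hi.2⟩)
        · exact Finset.mem_union_left _ h
      rcases Finset.mem_union.mp hiJ with h | h
      · simp only [hJ, Finset.mem_filter] at h
        exact h.2.le
      · have := Finset.mem_sdiff.mp h
        simp only [hF, Finset.mem_filter] at this
        exact this.1.2.ge

end PermStats
end

section
/- Let r ≥ 1 and let s be an integer with 0 ≤ s ≤ r. Let τ = (1 2 ⋯ r)^s be the s-th power of the cyclic permutation (1 2 ⋯ r) of {1,…,r}. Then ht(τ) = Σ_{i=1}^r |τ(i) − i| = 2s(r − s). -/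
open scoped BigOperators

namespace PermStats

lemma finRotate_pow_val {n : ℕ} (s : ℕ) (i : Fin (n + 1)) :
    ((((finRotate (n + 1)) ^ s) i : Fin (n + 1)) : ℕ) = ((i : ℕ) + s) % (n + 1) := by
  induction s with
  | zero => simp [Nat.mod_eq_of_lt i.isLt]
  | succ s ih =>
    rw [pow_succ', Equiv.Perm.mul_apply, finRotate_succ_apply, Fin.val_add, Fin.val_one',
      Nat.add_mod_mod, ih, Nat.mod_add_mod, Nat.add_assoc]

/-- The `s`-th power of the cyclic permutation `(1 2 ⋯ r)` (modelled as
`finRotate r` on `Fin r`) has height `2s(r - s)`, for `0 ≤ s ≤ r`, `r ≥ 1`. -/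
theorem ht_finRotate_pow (r : ℕ) (hr : 1 ≤ r) (s : ℕ) (hs : s ≤ r) :
    ht ((finRotate r) ^ s) = 2 * s * (r - s) := by
  obtain ⟨n, rfl⟩ : ∃ n, r = n + 1 := ⟨r - 1, by omega⟩
  unfold ht
  have step1 : ∑ i : Fin (n + 1), Nat.dist ((((finRotate (n + 1)) ^ s) i : ℕ)) (i : ℕ)
      = ∑ i : Fin (n + 1), (if (i : ℕ) < (n + 1) - s then s else (n + 1) - s) := by
    refine Finset.sum_congr rfl fun i _ => ?_
    rw [finRotate_pow_val]
    have hi := i.isLt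
    by_cases h : (i : ℕ) + s < n + 1
    · rw [Nat.mod_eq_of_lt h, if_pos (by omega)]
      simp [Nat.dist]
    · have hmod : ((i : ℕ) + s) % (n + 1) = (i : ℕ) + s - (n + 1) := by
        rw [Nat.mod_eq_sub_mod (by omega), Nat.mod_eq_of_lt (by omega)]
      rw [hmod, if_neg (by omega)]
      simp only [Nat.dist]
      omega
  rw [step1, Fin.sum_univ_eq_sum_range (fun i => if i < (n + 1) - s then s else (n + 1) - s)]
  set m := (n + 1) - s with hm
  rw [show n + 1 = m + s from by omega, Finset.sum_range_add]
  have e1 : ∑ i ∈ Finset.range m, (if i < m then s else m) = m * s := by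
    rw [Finset.sum_congr rfl fun i hi => if_pos (Finset.mem_range.mp hi)]
    simp [Finset.sum_const, mul_comm]
  have e2 : ∑ i ∈ Finset.range s, (if m + i < m then s else m) = s * m := by
    rw [Finset.sum_congr rfl fun i hi => if_neg (by omega)]
    simp [Finset.sum_const, mul_comm]
  rw [e1, e2]
  ring
end PermStats
end

section
/- Let σ be a derangement of {1,…,r} (σ(i) ≠ i for all i) and let s = #{i : σ(i) < i}. Then ht(σ) = Σ_{i=1}^r |σ(i) − i| ≤ 2s(r − s). -/
/-!
Since `∑ i, (σ i - i) = 0`, the total rise over the jumps equals the total fall over the drops,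
so `ht σ = 2 ∑_{i ∈ D} (i - σ i)` with `D` the set of the `s` drop positions. The positions in `D`
sum to at most the `s` largest values `r - 1, …, r - s`, and their images, being distinct, sum
to at least the `s` smallest values `0, …, s - 1`; the difference of these is `s (r - s)`.
-/

open scoped BigOperators

namespace Finset

variable {ι : Type*} {D : Finset ι} {f g : ι → ℤ}

theorem sum_le_sum_range_of_injOn (hf : Set.InjOn f D) {c : ℤ} (hc : ∀ i ∈ D, f i ≤ c) :
    ∑ i ∈ D, f i ≤ ∑ n ∈ range #D, (c - n) := by
  have h := sum_le_sum_range (s := D.image f) (c := c) (forall_mem_image.2 hc)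
  rwa [sum_image hf, card_image_of_injOn hf] at h

theorem sum_range_le_sum_of_injOn (hf : Set.InjOn f D) {c : ℤ} (hc : ∀ i ∈ D, c ≤ f i) :
    ∑ n ∈ range #D, (c + n) ≤ ∑ i ∈ D, f i := by
  have h := sum_range_le_sum (s := D.image f) (c := c) (forall_mem_image.2 hc)
  rwa [sum_image hf, card_image_of_injOn hf] at h

theorem sum_range_sub_sub_add (a b : ℤ) (s : ℕ) :
    ∑ n ∈ range s, ((b - n) - (a + n)) = s * (b - a + 1 - s) := by
  induction s with
  | zero => simp
  | succ s ih => rw [sum_range_succ, ih]; push_cast; ring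

theorem sum_sub_le_of_injOn (hf : Set.InjOn f D) (hg : Set.InjOn g D) {a b : ℤ}
    (hfb : ∀ i ∈ D, f i ≤ b) (hga : ∀ i ∈ D, a ≤ g i) :
    ∑ i ∈ D, (f i - g i) ≤ #D * (b - a + 1 - #D) :=
  calc ∑ i ∈ D, (f i - g i) = ∑ i ∈ D, f i - ∑ i ∈ D, g i := sum_sub_distrib ..
    _ ≤ ∑ n ∈ range #D, (b - n) - ∑ n ∈ range #D, (a + n) :=
      sub_le_sub (sum_le_sum_range_of_injOn hf hfb) (sum_range_le_sum_of_injOn hg hga)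
    _ = #D * (b - a + 1 - #D) := by rw [← sum_sub_distrib, sum_range_sub_sub_add]

end Finset

open Finset

theorem Equiv.Perm.sum_abs_sub_eq_two_mul_sum_filter {α : Type*} [Fintype α] (σ : Equiv.Perm α)
    (f : α → ℤ) : ∑ i, |f (σ i) - f i| = 2 * ∑ i with f (σ i) < f i, (f i - f (σ i)) := by
  have hzero : ∑ i, (f (σ i) - f i) = 0 := by
    rw [sum_sub_distrib, Equiv.sum_comp σ f, sub_self]
  have habs : ∀ i, |f (σ i) - f i|
      = (f (σ i) - f i) + 2 * if f (σ i) < f i then f i - f (σ i) else 0 := by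
    intro i
    split_ifs with h
    · rw [abs_of_neg (sub_neg.2 h)]; ring
    · rw [abs_of_nonneg (sub_nonneg.2 (not_lt.1 h))]; ring
  rw [sum_congr rfl fun i _ => habs i, sum_add_distrib, hzero, ← mul_sum, sum_filter, zero_add]

theorem Nat.cast_dist (m n : ℕ) : (Nat.dist m n : ℤ) = |(m : ℤ) - n| := by
  rcases le_total m n with h | h
  · rw [Nat.dist_eq_sub_of_le h, abs_of_nonpos (by omega)]; push_cast [h]; ring
  · rw [Nat.dist_eq_sub_of_le_right h, abs_of_nonneg (by omega)]; push_cast [h]; ring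

namespace PermStats

theorem ht_eq_two_mul_sum_drops {r : ℕ} (σ : Equiv.Perm (Fin r)) :
    (ht σ : ℤ) = 2 * ∑ i with σ i < i, ((i : ℤ) - σ i) := by
  rw [ht, Nat.cast_sum]
  simp_rw [Nat.cast_dist]
  rw [σ.sum_abs_sub_eq_two_mul_sum_filter fun i => ((i : ℕ) : ℤ)]
  simp only [Nat.cast_lt, Fin.val_fin_lt]

theorem sum_drops_sub_le {r : ℕ} (σ : Equiv.Perm (Fin r)) :
    ∑ i with σ i < i, ((i : ℤ) - σ i) ≤ drops σ * ((r : ℤ) - drops σ) := by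
  have hval : Function.Injective fun i : Fin r => ((i : ℕ) : ℤ) :=
    Nat.cast_injective.comp Fin.val_injective
  have h := sum_sub_le_of_injOn (D := {i | σ i < i}) hval.injOn (hval.comp σ.injective).injOn
    (a := 0) (b := r - 1) (fun i _ => by have := i.isLt; omega) (fun i _ => by simp)
  exact h.trans_eq (by rw [drops]; ring)

theorem ht_le_of_derangement_general (r : ℕ) (σ : Equiv.Perm (Fin r)) :
    ht σ ≤ 2 * drops σ * (r - drops σ) := by
  have hs : drops σ ≤ r := (card_filter_le _ _).trans_eq (card_fin r)
  zify [hs]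
  rw [ht_eq_two_mul_sum_drops, mul_assoc]
  exact mul_le_mul_of_nonneg_left (sum_drops_sub_le σ) zero_le_two

/-- If `σ` is a derangement of `{1,…,r}` and `s = c_<(σ)` is its number
of drops, then `ht(σ) ≤ 2s(r - s)`. -/
theorem ht_le_of_derangement (r : ℕ) (σ : Equiv.Perm (Fin r)) (hσ : ∀ i, σ i ≠ i) :
    ht σ ≤ 2 * drops σ * (r - drops σ) :=
  ht_le_of_derangement_general r σ

end PermStats
end

section
/- Let σ be a permutation of {1,…,r} and let s = #{i : σ(i) < i}. Then Σ_{i : σ(i) < i} (i − σ(i)) ≤ s(r − s). -/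
open scoped BigOperators

/-!
Cut `{0, …, r-1}` between `k` and `k + 1`. A drop `i` crosses exactly `i - σ i` of these cuts
downwards, so the sum is `∑ k, c k`, where `c k` counts the downward crossings of cut `k`.
As `σ` is a bijection, `c k` is also the number of upward crossings of cut `k`. Downward
crossers are drops lying above the cut, upward crossers are non-drops lying below it, hence
`c k ≤ min (k + 1, r - (k + 1), s, r - s)`, and summing this over `k` gives exactly
`m (r - m) = s (r - s)` for `m = min s (r - s)`.
-/

open Finset

theorem Equiv.Perm.card_filter_apply_and_not {α : Type*} [Fintype α] [DecidableEq α]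
    (σ : Equiv.Perm α) (p : α → Prop) [DecidablePred p] :
    #{i | p (σ i) ∧ ¬p i} = #{i | p i ∧ ¬p (σ i)} := by
  have hcard : #{i | p (σ i)} = #{i | p i} := card_equiv σ (by simp)
  simpa only [filter_and_not] using card_sdiff_comm hcard

theorem Finset.sum_tsub_eq_sum_card_filter {ι : Type*} (s : Finset ι) (a b : ι → ℕ) {n : ℕ}
    (ha : ∀ i ∈ s, a i ≤ n) :
    ∑ i ∈ s, (a i - b i) = ∑ k ∈ range n, #{i ∈ s | b i ≤ k ∧ k < a i} := by
  have hcount : ∀ i ∈ s,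
      a i - b i = #((range n).bipartiteAbove (fun i k => b i ≤ k ∧ k < a i) i) := fun i hi => by
    rw [bipartiteAbove, ← Nat.card_Ico]
    congr 1
    ext k
    simp only [mem_filter, mem_range, mem_Ico]
    have := ha i hi
    omega
  rw [sum_congr rfl hcount, sum_card_bipartiteAbove_eq_sum_card_bipartiteBelow]
  rfl

theorem Finset.sum_range_tsub_odd {r m : ℕ} (h : 2 * m ≤ r) :
    ∑ j ∈ range m, (r - (2 * j + 1)) = m * (r - m) := by
  induction m with
  | zero => simp
  | succ m ih =>
    rw [sum_range_succ, ih (by omega)]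
    zify [show m ≤ r by omega, show 2 * m + 1 ≤ r by omega, show m + 1 ≤ r by omega]
    ring

theorem Finset.sum_range_min_min {r m : ℕ} (h : 2 * m ≤ r) :
    ∑ k ∈ range r, min (min (k + 1) (r - (k + 1))) m = m * (r - m) := by
  -- Both sides count the pairs `(j, k)` with `j < m` and `j ≤ k < r - (j + 1)`.
  let R : ℕ → ℕ → Prop := fun j k => j ≤ k ∧ k + j + 1 < r
  have hk : ∀ k ∈ range r,
      min (min (k + 1) (r - (k + 1))) m = #((range m).bipartiteBelow R k) := fun k _ => by
    rw [bipartiteBelow, ← card_range (min _ _)]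
    congr 1
    ext j
    simp only [R, mem_filter, mem_range]
    omega
  have hj : ∀ j ∈ range m, #((range r).bipartiteAbove R j) = r - (2 * j + 1) := fun j _ => by
    trans #(Ico j (r - (j + 1)))
    · rw [bipartiteAbove]
      congr 1
      ext k
      simp only [R, mem_filter, mem_range, mem_Ico]
      omega
    · rw [Nat.card_Ico]
      omega
  rw [sum_congr rfl hk, ← sum_card_bipartiteAbove_eq_sum_card_bipartiteBelow, sum_congr rfl hj,
    sum_range_tsub_odd h]

theorem Nat.min_mul_tsub_min (s r : ℕ) : min s (r - s) * (r - min s (r - s)) = s * (r - s) := by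
  rcases le_total s (r - s) with h | h
  · rw [min_eq_left h]
  · rw [min_eq_right h, mul_comm]
    rcases le_total s r with h' | h'
    · rw [Nat.sub_sub_self h']
    · simp [Nat.sub_eq_zero_of_le h']

namespace PermStats

variable {r : ℕ}

def crossings (σ : Equiv.Perm (Fin r)) (k : ℕ) : ℕ :=
  #{i | (σ i : ℕ) ≤ k ∧ k < i}

theorem sum_filter_drops_eq_sum_crossings (σ : Equiv.Perm (Fin r)) :
    ∑ i ∈ univ.filter (fun i => σ i < i), ((i : ℕ) - (σ i : ℕ)) =
      ∑ k ∈ range r, crossings σ k := by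
  rw [sum_filter_of_ne fun i _ h => Fin.lt_def.mpr (by omega)]
  exact sum_tsub_eq_sum_card_filter _ _ _ fun i _ => i.isLt.le

theorem crossings_eq_card_up (σ : Equiv.Perm (Fin r)) (k : ℕ) :
    crossings σ k = #{i : Fin r | (i : ℕ) ≤ k ∧ k < σ i} := by
  simpa only [crossings, not_le] using
    σ.card_filter_apply_and_not (fun i : Fin r => (i : ℕ) ≤ k)

theorem crossings_le_min (σ : Equiv.Perm (Fin r)) (k : ℕ) :
    crossings σ k ≤ min (min (k + 1) (r - (k + 1))) (min (drops σ) (r - drops σ)) := by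
  have hbelow : crossings σ k ≤ k + 1 := by
    rw [crossings_eq_card_up, ← card_range (k + 1)]
    refine card_le_card_of_injOn Fin.val (fun i hi => ?_) Fin.val_injective.injOn
    simp only [coe_filter, Set.mem_ofPred_eq, mem_univ, true_and, coe_range, Set.mem_Iio] at hi ⊢
    omega
  have habove : crossings σ k ≤ r - (k + 1) := by
    rw [← Nat.card_Ico]
    refine card_le_card_of_injOn Fin.val (fun i hi => ?_) Fin.val_injective.injOn
    simp only [coe_filter, Set.mem_ofPred_eq, mem_univ, true_and, coe_Ico, Set.mem_Ico] at hi ⊢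
    exact ⟨hi.2, i.isLt⟩
  have hdrops : crossings σ k ≤ drops σ :=
    card_le_card fun i hi => by
      simp only [mem_filter, mem_univ, true_and, Fin.lt_def] at hi ⊢
      omega
  have hnondrops : crossings σ k ≤ r - drops σ := by
    have hcompl : drops σ + #{i | ¬σ i < i} = r := by
      rw [drops, card_filter_add_card_filter_not, card_univ, Fintype.card_fin]
    have hup : crossings σ k ≤ #{i | ¬σ i < i} := by
      rw [crossings_eq_card_up]
      exact card_le_card fun i hi => by
        simp only [mem_filter, mem_univ, true_and, Fin.lt_def] at hi ⊢
        omega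
    omega
  omega

/-- For any permutation `σ` of `{1,…,r}` with `s = c_<(σ)` drops, the sum
of `i - σ(i)` over the drop positions is at most `s(r - s)`. -/
theorem sum_drops_le (r : ℕ) (σ : Equiv.Perm (Fin r)) :
    ∑ i ∈ Finset.univ.filter (fun i => σ i < i), ((i : ℕ) - (σ i : ℕ)) ≤
      drops σ * (r - drops σ) := by
  set s := drops σ
  calc _ = ∑ k ∈ range r, crossings σ k := sum_filter_drops_eq_sum_crossings σ
    _ ≤ ∑ k ∈ range r, min (min (k + 1) (r - (k + 1))) (min s (r - s)) :=
      sum_le_sum fun k _ => crossings_le_min σ k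
    _ = min s (r - s) * (r - min s (r - s)) := sum_range_min_min (by omega)
    _ = s * (r - s) := Nat.min_mul_tsub_min s r

end PermStats
end

section
/- Let σ be a derangement of {1,…,r} (σ(i) ≠ i for all i), let s = #{i : σ(i) < i}, and suppose there exists i₀ ∈ {1,…,r} with i₀ > r − s and σ(i₀) > i₀. Then ht(σ) = Σ_{i=1}^r |σ(i) − i| ≤ 2s(r − s) + 2(r − s − i₀); in particular ht(σ) < 2s(r − s). -/
open scoped BigOperators

/-!
Since `∑ᵢ (σ i - i) = 0`, the height is twice the total displacement `∑ (σ i - i)` over the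
jumps `i < σ i`. If there are `m` jumps, their targets are `m` distinct values below `r`, so they
sum to at most `(r - 1) + ⋯ + (r - m)`, while their positions are `m` distinct values containing
`i₀`, so they sum to at least `0 + ⋯ + (m - 2) + i₀`. For a derangement `m = r - s`, and a jump
at a position `i₀ ≥ m` makes the correction term negative.
-/

open Finset

lemma Int.natCast_dist (a b : ℕ) : ((Nat.dist a b : ℕ) : ℤ) = |(a : ℤ) - b| := by
  rw [← Int.natCast_natAbs]
  unfold Nat.dist
  omega

lemma Finset.two_mul_sum_range_intCast (n : ℕ) : 2 * ∑ k ∈ range n, (k : ℤ) = n * (n - 1) := by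
  induction n with
  | zero => simp
  | succ n ih => rw [sum_range_succ, mul_add, ih]; push_cast; ring

namespace Fin

variable {r : ℕ}

lemma sum_val_le_sum_range (S : Finset (Fin r)) :
    ∑ i ∈ S, ((i : ℕ) : ℤ) ≤ ∑ n ∈ range #S, ((r : ℤ) - 1 - n) := by
  have hle : ∀ x ∈ S.map (valEmbedding.trans Nat.castEmbedding), x ≤ (r : ℤ) - 1 := by
    intro x hx
    obtain ⟨i, -, rfl⟩ := mem_map.mp hx
    have := i.is_lt
    simp only [Function.Embedding.trans_apply, valEmbedding_apply, Nat.castEmbedding_apply]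
    omega
  simpa using sum_le_sum_range hle

lemma sum_range_le_sum_val (S : Finset (Fin r)) :
    ∑ n ∈ range #S, (n : ℤ) ≤ ∑ i ∈ S, ((i : ℕ) : ℤ) := by
  have hle : ∀ x ∈ S.map (valEmbedding.trans Nat.castEmbedding), (0 : ℤ) ≤ x := by simp
  simpa using sum_range_le_sum hle

end Fin

namespace PermStats

variable {r : ℕ} (σ : Equiv.Perm (Fin r))

def jumpSet : Finset (Fin r) := {i | i < σ i}

@[simp]
lemma mem_jumpSet {i : Fin r} : i ∈ jumpSet σ ↔ i < σ i := by simp [jumpSet]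

lemma card_jumpSet : #(jumpSet σ) = jumps σ := rfl

lemma drops_add_jumps {σ : Equiv.Perm (Fin r)} (hσ : ∀ i, σ i ≠ i) : drops σ + jumps σ = r := by
  have hcompl : ({i | ¬σ i < i} : Finset (Fin r)) = jumpSet σ :=
    filter_congr fun i _ => by rw [not_lt]; exact (hσ i).symm.le_iff_lt
  rw [drops, ← card_jumpSet, ← hcompl, card_filter_add_card_filter_not, card_univ,
    Fintype.card_fin]

lemma sum_displacement_eq_zero : ∑ i, (((σ i : ℕ) : ℤ) - (i : ℕ)) = 0 := by
  rw [sum_sub_distrib, Equiv.sum_comp σ (fun i => ((i : ℕ) : ℤ)), sub_self]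

lemma ht_eq_two_mul_sum_jumpSet :
    (ht σ : ℤ) = 2 * ∑ i ∈ jumpSet σ, (((σ i : ℕ) : ℤ) - (i : ℕ)) := by
  let d (i : Fin r) : ℤ := ((σ i : ℕ) : ℤ) - (i : ℕ)
  have hsplit (f : Fin r → ℤ) :
      ∑ i ∈ jumpSet σ, f i + ∑ i with ¬i < σ i, f i = ∑ i, f i :=
    sum_filter_add_sum_filter_not univ (fun i => i < σ i) f
  have hjump : ∑ i ∈ jumpSet σ, |d i| = ∑ i ∈ jumpSet σ, d i :=
    sum_congr rfl fun i hi =>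
      abs_of_pos (sub_pos.mpr (by exact_mod_cast (mem_jumpSet σ).mp hi))
  have hrest : ∑ i with ¬i < σ i, |d i| = -∑ i with ¬i < σ i, d i := by
    rw [← sum_neg_distrib]
    exact sum_congr rfl fun i hi =>
      abs_of_nonpos (sub_nonpos.mpr (by exact_mod_cast not_lt.mp (mem_filter.mp hi).2))
  have hzero : ∑ i, d i = 0 := sum_displacement_eq_zero σ
  have hht : (ht σ : ℤ) = ∑ i, |d i| := by
    simp only [ht, Nat.cast_sum, Int.natCast_dist, d]
  rw [hht, ← hsplit, hjump, hrest]
  rw [← hsplit] at hzero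
  linarith

lemma ht_le_of_mem_jumpSet {i₀ : Fin r} (hi₀ : i₀ ∈ jumpSet σ) :
    (ht σ : ℤ) ≤ 2 * jumps σ * (r - jumps σ) + 2 * (jumps σ - 1 - (i₀ : ℕ)) := by
  obtain ⟨k, hk⟩ : ∃ k, jumps σ = k + 1 :=
    Nat.exists_eq_add_one.mpr (card_pos.mpr ⟨i₀, hi₀⟩)
  have htargets :
      ∑ i ∈ jumpSet σ, ((σ i : ℕ) : ℤ) ≤ ∑ n ∈ range (k + 1), ((r : ℤ) - 1 - n) := by
    simpa [card_jumpSet, hk] using Fin.sum_val_le_sum_range ((jumpSet σ).map σ.toEmbedding)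
  have hpositions :
      ∑ n ∈ range k, (n : ℤ) + (i₀ : ℕ) ≤ ∑ i ∈ jumpSet σ, ((i : ℕ) : ℤ) := by
    have hrest := Fin.sum_range_le_sum_val ((jumpSet σ).erase i₀)
    rw [card_erase_of_mem hi₀, card_jumpSet, hk, Nat.add_sub_cancel] at hrest
    rw [← sum_erase_add _ _ hi₀]
    linarith
  have hgauss := two_mul_sum_range_intCast k
  rw [sum_sub_distrib, sum_const, card_range, nsmul_eq_mul, sum_range_succ] at htargets
  rw [ht_eq_two_mul_sum_jumpSet, sum_sub_distrib, hk]
  push_cast at htargets ⊢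
  linarith

/-- Let `σ` be a derangement of `{1,…,r}` with `s = c_<(σ)` drops, and
suppose some position `i₀ > r - s` (in 1-based numbering: here `i₀` is the 1-based position
`(i0 : ℕ) + 1` of `i0 : Fin r`) satisfies `σ(i₀) > i₀`.  Then
`ht(σ) ≤ 2s(r-s) + 2(r - s - i₀)`, and in particular `ht(σ) < 2s(r-s)`. -/
theorem ht_lt_of_late_jump (r : ℕ) (σ : Equiv.Perm (Fin r)) (hσ : ∀ i, σ i ≠ i)
    (i0 : Fin r) (hi0 : r - drops σ < (i0 : ℕ) + 1) (hjump : i0 < σ i0) :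
    (ht σ : ℤ) ≤ 2 * (drops σ : ℤ) * ((r : ℤ) - drops σ) +
        2 * ((r : ℤ) - (drops σ : ℤ) - ((i0 : ℕ) + 1)) ∧
      (ht σ : ℤ) < 2 * (drops σ : ℤ) * ((r : ℤ) - drops σ) := by
  have hr : (r : ℤ) = drops σ + jumps σ := by exact_mod_cast (drops_add_jumps hσ).symm
  have hbound := ht_le_of_mem_jumpSet σ ((mem_jumpSet σ).mpr hjump)
  have hlate : (jumps σ : ℤ) - 1 - (i0 : ℕ) < 0 := by omega
  rw [hr] at hbound ⊢
  constructor <;> linarith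

end PermStats
end

section
/- Let σ be a derangement of {1,…,r} (σ(i) ≠ i for all i), let s = #{i : σ(i) < i}, and suppose ht(σ) = Σ_{i=1}^r |σ(i) − i| = 2s(r − s). Then for every i ∈ {1,…,r}, σ(i) < i if and only if i > r − s; that is, the set of drop positions of σ is exactly {r−s+1, …, r} and the set of jump positions is exactly {1, …, r−s}. -/
/-!
Since `∑ σ(i) = ∑ i`, the height is twice `∑ (i - σ(i))` over the drop positions `i`. For `s`
drops this is at most the sum of the `s` largest positions minus the sum of the `s` smallest
values, which is `s(r - s)`, and an exchange argument shows the inequality is strict unless the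
drop positions are exactly the `s` largest ones.
-/

open scoped BigOperators

open Finset

namespace Finset

theorem sum_lt_sum_of_card_eq {ι : Type*} [DecidableEq ι] {s t : Finset ι} {f : ι → ℕ}
    (hcard : #s = #t) (hne : s ≠ t) (hlt : ∀ i ∈ s \ t, ∀ j ∈ t \ s, f i < f j) :
    ∑ i ∈ s, f i < ∑ i ∈ t, f i := by
  have hst : (s \ t).Nonempty :=
    sdiff_nonempty.2 fun h => hne (eq_of_subset_of_card_le h hcard.ge)
  set c := (s \ t).sup' hst f
  have hsdiff : ∑ i ∈ s \ t, f i < ∑ i ∈ t \ s, f i := calc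
    _ ≤ #(s \ t) • c := sum_le_card_nsmul _ _ _ fun i hi => le_sup' f hi
    _ < #(s \ t) • (c + 1) := by
      simp only [smul_eq_mul]
      exact Nat.mul_lt_mul_of_pos_left (Nat.lt_succ_self c) hst.card_pos
    _ ≤ ∑ j ∈ t \ s, f j := by
      rw [card_sdiff_comm hcard]
      exact card_nsmul_le_sum _ _ _ fun j hj => (sup'_lt_iff hst).2 fun i hi => hlt i hi j hj
  rw [← sum_inter_add_sum_sdiff s t, ← sum_inter_add_sum_sdiff t s, inter_comm]
  omega

theorem sum_lt_sum_Ico_of_subset_range {A : Finset ℕ} {n : ℕ} (hA : A ⊆ range n)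
    (hne : A ≠ Ico (n - #A) n) : ∑ a ∈ A, a < ∑ a ∈ Ico (n - #A) n, a := by
  have hcard : #A ≤ n := by simpa using card_le_card hA
  refine sum_lt_sum_of_card_eq (by rw [Nat.card_Ico]; omega) hne fun a ha b hb => ?_
  have := hA (mem_sdiff.1 ha).1
  simp only [mem_sdiff, mem_Ico, mem_range] at ha hb this
  omega

theorem sum_range_card_le_sum (A : Finset ℕ) : ∑ a ∈ range #A, a ≤ ∑ a ∈ A, a := by
  rcases eq_or_ne (range #A) A with h | hne
  · exact (sum_congr h fun _ _ => rfl).le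
  refine (sum_lt_sum_of_card_eq (card_range _) hne fun a ha b hb => ?_).le
  simp only [mem_sdiff, mem_range] at ha hb
  omega

theorem sum_Ico_sub_eq_mul_add_sum_range (s n : ℕ) (h : s ≤ n) :
    ∑ a ∈ Ico (n - s) n, a = s * (n - s) + ∑ a ∈ range s, a := by
  rw [sum_Ico_eq_sum_range, sum_add_distrib, sum_const, card_range, smul_eq_mul,
    Nat.sub_sub_self h]

end Finset

theorem Equiv.Perm.sum_tsub_comp_eq {α : Type*} [Fintype α] (σ : Equiv.Perm α) (f : α → ℕ) :
    ∑ i, (f i - f (σ i)) = ∑ i, (f (σ i) - f i) := by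
  have h : ∑ i, ((f i - f (σ i)) + f (σ i)) = ∑ i, ((f (σ i) - f i) + f i) :=
    sum_congr rfl fun i _ => by omega
  rw [sum_add_distrib, sum_add_distrib, Equiv.sum_comp σ f] at h
  omega

namespace PermStats

def dropSet {r : ℕ} (σ : Equiv.Perm (Fin r)) : Finset (Fin r) := {i | σ i < i}

theorem card_dropSet {r : ℕ} (σ : Equiv.Perm (Fin r)) : #(dropSet σ) = drops σ := rfl

theorem ht_add_two_mul_sum_apply_dropSet {r : ℕ} (σ : Equiv.Perm (Fin r)) :
    ht σ + 2 * ∑ i ∈ dropSet σ, (σ i : ℕ) = 2 * ∑ i ∈ dropSet σ, (i : ℕ) := by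
  have hdrops : ∑ i : Fin r, ((i : ℕ) - σ i) = ∑ i ∈ dropSet σ, ((i : ℕ) - σ i) :=
    (sum_filter_of_ne fun i _ h => Fin.lt_def.2 (by omega)).symm
  have hht : ht σ = 2 * ∑ i ∈ dropSet σ, ((i : ℕ) - σ i) := by
    rw [← hdrops, two_mul]
    nth_rewrite 1 [σ.sum_tsub_comp_eq (fun i => (i : ℕ))]
    rw [← sum_add_distrib]
    rfl
  have hle : ∀ i ∈ dropSet σ, (σ i : ℕ) ≤ i := fun i hi => (mem_filter.1 hi).2.le
  rw [hht, sum_tsub_distrib _ hle, ← mul_add, Nat.sub_add_cancel (sum_le_sum hle)]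

/-- If `σ` is a derangement of `{1,…,r}` with `s = c_<(σ)` drops and
`ht(σ) = 2s(r-s)`, then the drop positions are exactly the (1-based) positions `> r - s`
and the jump positions are exactly the (1-based) positions `≤ r - s`.  (Here the 1-based
position of `i : Fin r` is `(i : ℕ) + 1`.) -/
theorem drops_iff_of_ht_eq (r : ℕ) (σ : Equiv.Perm (Fin r)) (hσ : ∀ i, σ i ≠ i)
    (hht : ht σ = 2 * drops σ * (r - drops σ)) :
    ∀ i : Fin r, (σ i < i ↔ r - drops σ < (i : ℕ) + 1) ∧
      (i < σ i ↔ (i : ℕ) + 1 ≤ r - drops σ) := by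
  have hD : (dropSet σ).map Fin.valEmbedding = Ico (r - drops σ) r := by
    by_contra hne
    have hupper := sum_lt_sum_Ico_of_subset_range (A := (dropSet σ).map Fin.valEmbedding)
      (n := r) (fun a ha => by obtain ⟨i, -, rfl⟩ := mem_map.1 ha; simp)
      (by simpa [card_dropSet] using hne)
    have hlower := sum_range_card_le_sum (((dropSet σ).map σ.toEmbedding).map Fin.valEmbedding)
    simp only [card_map, sum_map, card_dropSet, Fin.valEmbedding_apply,
      Equiv.coe_toEmbedding] at hupper hlower
    have hsr : drops σ ≤ r := by simpa [card_dropSet] using card_le_univ (dropSet σ)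
    rw [sum_Ico_sub_eq_mul_add_sum_range _ _ hsr] at hupper
    linarith [ht_add_two_mul_sum_apply_dropSet σ]
  intro i
  have hdrop : σ i < i ↔ r - drops σ ≤ i := by
    have := Finset.ext_iff.1 hD (Fin.valEmbedding i)
    rw [mem_map'] at this
    simpa [dropSet] using this
  have hjump : i < σ i ↔ ¬ σ i < i := ((hσ i).symm.le_iff_lt).symm.trans not_lt.symm
  rw [hjump, hdrop]
  omega

end PermStats
end

section
/- Let σ be a permutation of {1,…,r} which is not the identity and which has at least one fixed point. Then there exist i, j ∈ {1,…,r} with σ(i) ≠ i and σ(j) = j such that the permutation σ' = σ ∘ (i j) (σ composed with the transposition of i and j) satisfies c_<(σ') = c_<(σ) + 1 and c_>(σ') = c_>(σ). -/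
/-!
Let `j` be a fixed point of `σ` and `i ≠ j`. The permutation `σ * swap i j` agrees with `σ`
off `{i, j}` and sends `i ↦ j`, `j ↦ σ i`, so its drops and jumps differ from those of `σ` only
through the relative order of `i`, `σ i` and `j`: it gains exactly one drop and no jump when
`(i, σ i, j)` is cyclically increasing. Such an `i` is found by reading `Fin r` cyclically
starting just after `j`: if `i` is the first non-fixed point in this order, then `σ i`, also
non-fixed, comes after `i`, and `j` comes last. -/

open scoped BigOperators

namespace PermStats

section CountChange

variable {α : Type*} [Fintype α] [DecidableEq α]

theorem sum_add_eq_sum_add_of_eqOn_compl_pair {M : Type*} [AddCommMonoid M] {f g : α → M}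
    {i j : α} (hij : i ≠ j) (h : ∀ x, x ≠ i → x ≠ j → f x = g x) :
    ∑ x, f x + (g i + g j) = ∑ x, g x + (f i + f j) := by
  have hcompl : ∑ x ∈ ({i, j} : Finset α)ᶜ, f x = ∑ x ∈ ({i, j} : Finset α)ᶜ, g x :=
    Finset.sum_congr rfl fun x hx => by
      simp only [Finset.mem_compl, Finset.mem_insert, Finset.mem_singleton, not_or] at hx
      exact h x hx.1 hx.2
  rw [← Finset.sum_compl_add_sum {i, j} f, ← Finset.sum_compl_add_sum {i, j} g,
    Finset.sum_pair hij, Finset.sum_pair hij, hcompl]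
  ac_rfl

theorem card_filter_add_eq_card_filter_add_of_eqOn_compl_pair {p q : α → Prop}
    [DecidablePred p] [DecidablePred q] {i j : α} (hij : i ≠ j)
    (h : ∀ x, x ≠ i → x ≠ j → (p x ↔ q x)) :
    (Finset.univ.filter p).card + ((if q i then 1 else 0) + if q j then 1 else 0) =
      (Finset.univ.filter q).card + ((if p i then 1 else 0) + if p j then 1 else 0) := by
  simp only [Finset.card_filter]
  exact sum_add_eq_sum_add_of_eqOn_compl_pair (f := fun x => if p x then 1 else 0)
    (g := fun x => if q x then 1 else 0) hij fun x hxi hxj => if_congr (h x hxi hxj) rfl rfl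

end CountChange

section SwapWithFixedPoint

variable {r : ℕ} {σ : Equiv.Perm (Fin r)} {i j : Fin r}

theorem drops_mul_swap_add (hij : i ≠ j) (hj : σ j = j) :
    drops (σ * Equiv.swap i j) + (if σ i < i then 1 else 0) =
      drops σ + ((if j < i then 1 else 0) + if σ i < j then 1 else 0) := by
  have hcount := card_filter_add_eq_card_filter_add_of_eqOn_compl_pair
    (p := fun x => (σ * Equiv.swap i j) x < x) (q := fun x => σ x < x) hij
    fun x hxi hxj => by rw [Equiv.Perm.mul_apply, Equiv.swap_apply_of_ne_of_ne hxi hxj]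
  simp only [Equiv.Perm.mul_apply, Equiv.swap_apply_left, Equiv.swap_apply_right, hj,
    lt_self_iff_false, if_false, add_zero] at hcount
  exact hcount

theorem jumps_mul_swap_add (hij : i ≠ j) (hj : σ j = j) :
    jumps (σ * Equiv.swap i j) + (if i < σ i then 1 else 0) =
      jumps σ + ((if i < j then 1 else 0) + if j < σ i then 1 else 0) := by
  have hcount := card_filter_add_eq_card_filter_add_of_eqOn_compl_pair
    (p := fun x => x < (σ * Equiv.swap i j) x) (q := fun x => x < σ x) hij
    fun x hxi hxj => by rw [Equiv.Perm.mul_apply, Equiv.swap_apply_of_ne_of_ne hxi hxj]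
  simp only [Equiv.Perm.mul_apply, Equiv.swap_apply_left, Equiv.swap_apply_right, hj,
    lt_self_iff_false, if_false, add_zero] at hcount
  exact hcount

theorem drops_jumps_mul_swap_of_cyclic (hij : i ≠ j) (hj : σ j = j)
    (hcyc : i < σ i ∧ σ i < j ∨ σ i < j ∧ j < i ∨ j < i ∧ i < σ i) :
    drops (σ * Equiv.swap i j) = drops σ + 1 ∧ jumps (σ * Equiv.swap i j) = jumps σ := by
  have hdrops := drops_mul_swap_add hij hj
  have hjumps := jumps_mul_swap_add hij hj
  simp only [Fin.lt_def] at hcyc hdrops hjumps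
  constructor <;> split_ifs at hdrops hjumps <;> omega

def rankAfter (j x : Fin r) : ℕ :=
  if j < x then x else x + r

theorem exists_ne_cyclic_of_ne_one (hne : σ ≠ 1) (hj : σ j = j) :
    ∃ i, σ i ≠ i ∧ (i < σ i ∧ σ i < j ∨ σ i < j ∧ j < i ∨ j < i ∧ i < σ i) := by
  obtain ⟨i, hi, hmin⟩ := σ.support.exists_min_image (rankAfter j)
    (Finset.nonempty_iff_ne_empty.2 (mt Equiv.Perm.support_eq_empty_iff.1 hne))
  have hle := hmin _ (Equiv.Perm.apply_mem_support.2 hi)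
  rw [Equiv.Perm.mem_support] at hi
  have hij : i ≠ j := fun h => hi (h ▸ hj)
  have hσij : σ i ≠ j := fun h => hij (σ.injective (h.trans hj.symm))
  refine ⟨i, hi, ?_⟩
  simp only [rankAfter, Fin.lt_def] at hle ⊢
  rw [Ne, Fin.ext_iff] at hi hij hσij
  split_ifs at hle <;> omega

end SwapWithFixedPoint

/-- If the permutation `σ` of `{1,…,r}` is not the identity but has a
fixed point, then there are `i`, `j` with `σ(i) ≠ i`, `σ(j) = j` such that
`σ' = σ ∘ (i j)` (transposition applied first, i.e. `σ * Equiv.swap i j`) has one more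
drop and the same number of jumps as `σ`. -/
theorem exists_swap_add_drop (r : ℕ) (σ : Equiv.Perm (Fin r)) (hne : σ ≠ 1)
    (hfix : ∃ j, σ j = j) :
    ∃ i j : Fin r, σ i ≠ i ∧ σ j = j ∧
      drops (σ * Equiv.swap i j) = drops σ + 1 ∧ jumps (σ * Equiv.swap i j) = jumps σ := by
  obtain ⟨j, hj⟩ := hfix
  obtain ⟨i, hi, hcyc⟩ := exists_ne_cyclic_of_ne_one hne hj
  have hij : i ≠ j := fun h => hi (h ▸ hj)
  exact ⟨i, j, hi, hj, drops_jumps_mul_swap_of_cyclic hij hj hcyc⟩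

end PermStats
end

section
/- Let σ be a permutation of {1,…,r} which is not the identity and which has at least one fixed point. Then there exist i, j ∈ {1,…,r} with σ(i) ≠ i and σ(j) = j such that the permutation σ' = σ ∘ (i j) (σ composed with the transposition of i and j) satisfies c_>(σ') = c_>(σ) + 1 and c_<(σ') = c_<(σ). -/
/-!
Composing with `(i j)`, where `j` is fixed, changes `σ` only at `i` and `j` and makes `j` a moved
point, so `jumps + drops`, the size of the support, grows by one: it suffices to gain exactly one
jump. Comparing the two changed positions, this happens precisely when `i < j < σ i`, or when `i`
is a drop whose interval `(σ i, i)` does not contain `j`. The largest moved point below `j` is such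
an `i` when it exists (if it is a jump, maximality forces `σ i` past `j`); otherwise the preimage of
the smallest moved point is.
-/

open scoped BigOperators

namespace PermStats

section

variable {α : Type*} [Fintype α] [DecidableEq α]

lemma sum_add_eq_sum_add_of_eq_off_pair {M : Type*} [AddCommMonoid M] {f g : α → M} {i j : α}
    (hij : i ≠ j) (h : ∀ k, k ≠ i → k ≠ j → f k = g k) :
    ∑ k, f k + (g i + g j) = ∑ k, g k + (f i + f j) := by
  have hcompl : ∑ k ∈ {i, j}ᶜ, f k = ∑ k ∈ {i, j}ᶜ, g k :=
    Finset.sum_congr rfl fun k hk => by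
      simp only [Finset.mem_compl, Finset.mem_insert, Finset.mem_singleton, not_or] at hk
      exact h k hk.1 hk.2
  rw [← Finset.sum_add_sum_compl {i, j} f, ← Finset.sum_add_sum_compl {i, j} g, hcompl,
    Finset.sum_pair hij, Finset.sum_pair hij]
  abel

lemma card_support_mul_swap {σ : Equiv.Perm α} {i j : α} (hi : σ i ≠ i) (hj : σ j = j) :
    (σ * Equiv.swap i j).support.card = σ.support.card + 1 := by
  have hij : i ≠ j := by rintro rfl; exact hi hj
  have hσij : σ i ≠ j := fun h => hij (σ.injective (h.trans hj.symm))
  have hsupp : (σ * Equiv.swap i j).support = insert j σ.support := by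
    ext k
    by_cases hki : k = i
    · subst hki; simp [hj, hij.symm, hi]
    by_cases hkj : k = j
    · subst hkj; simp [hσij]
    · simp [Equiv.swap_apply_of_ne_of_ne hki hkj, hkj]
  rw [hsupp, Finset.card_insert_of_notMem (Equiv.Perm.notMem_support.mpr hj)]

end

variable {r : ℕ}

lemma jumps_add_drops (σ : Equiv.Perm (Fin r)) : jumps σ + drops σ = σ.support.card := by
  rw [jumps, drops, ← Finset.card_union_of_disjoint, ← Finset.filter_or]
  · congr 1
    ext k
    simp only [Finset.mem_filter, Finset.mem_univ, true_and, Equiv.Perm.mem_support]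
    exact or_comm.trans ne_iff_lt_or_gt.symm
  · exact Finset.disjoint_filter.mpr fun k _ h h' => lt_asymm h h'

lemma jumps_mul_swap (σ : Equiv.Perm (Fin r)) {i j : Fin r} (hij : i ≠ j) :
    jumps (σ * Equiv.swap i j) + ((if i < σ i then 1 else 0) + (if j < σ j then 1 else 0))
      = jumps σ + ((if i < σ j then 1 else 0) + (if j < σ i then 1 else 0)) := by
  have key := sum_add_eq_sum_add_of_eq_off_pair
    (f := fun k => if k < (σ * Equiv.swap i j) k then 1 else 0)
    (g := fun k => if k < σ k then 1 else 0) hij fun k hki hkj => by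
      rw [Equiv.Perm.mul_apply, Equiv.swap_apply_of_ne_of_ne hki hkj]
  rw [jumps, jumps, Finset.card_filter, Finset.card_filter]
  simpa only [Equiv.Perm.mul_apply, Equiv.swap_apply_left, Equiv.swap_apply_right] using key

lemma jumps_mul_swap_eq_succ {σ : Equiv.Perm (Fin r)} {i j : Fin r} (hj : σ j = j)
    (hi : (i < j ∧ j < σ i) ∨ (σ i < i ∧ (i < j ∨ j < σ i))) :
    jumps (σ * Equiv.swap i j) = jumps σ + 1 := by
  have hij : i ≠ j := by rintro rfl; simp [hj] at hi
  have key := jumps_mul_swap σ hij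
  rw [hj] at key
  split_ifs at key <;> omega

lemma exists_jump_over_or_drop_not_over {σ : Equiv.Perm (Fin r)} (hσ : σ ≠ 1) {j : Fin r}
    (hj : σ j = j) : ∃ i, (i < j ∧ j < σ i) ∨ (σ i < i ∧ (i < j ∨ j < σ i)) := by
  by_cases hbelow : (σ.support.filter (· < j)).Nonempty
  · set i := (σ.support.filter (· < j)).max' hbelow
    obtain ⟨hi, hij⟩ := Finset.mem_filter.mp ((σ.support.filter (· < j)).max'_mem hbelow)
    refine ⟨i, ?_⟩
    rcases (Equiv.Perm.mem_support.mp hi).lt_or_gt with hdrop | hjump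
    · exact Or.inr ⟨hdrop, Or.inl hij⟩
    · refine Or.inl ⟨hij, lt_of_not_ge fun hle => ?_⟩
      have hσij : σ i ≠ j := fun h => hij.ne (σ.injective (h.trans hj.symm))
      have hmem : σ i ∈ σ.support.filter (· < j) :=
        Finset.mem_filter.mpr ⟨Equiv.Perm.apply_mem_support.mpr hi, lt_of_le_of_ne hle hσij⟩
      exact (Finset.le_max' _ _ hmem).not_gt hjump
  · have hne : σ.support.Nonempty :=
      Finset.nonempty_iff_ne_empty.mpr (Equiv.Perm.support_eq_empty_iff.not.mpr hσ)
    set m := σ.support.min' hne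
    have hm : m ∈ σ.support := σ.support.min'_mem hne
    have hi : σ.symm m ∈ σ.support := by
      rw [← Equiv.Perm.apply_mem_support, Equiv.apply_symm_apply]; exact hm
    refine ⟨σ.symm m, Or.inr ⟨?_, Or.inr ?_⟩⟩
    · rw [Equiv.apply_symm_apply]
      refine lt_of_le_of_ne (σ.support.min'_le _ hi) fun h => ?_
      exact Equiv.Perm.mem_support.mp hm (by simpa using congrArg σ h)
    · rw [Equiv.apply_symm_apply]
      refine lt_of_le_of_ne (not_lt.mp fun hmj => hbelow ⟨m, Finset.mem_filter.mpr ⟨hm, hmj⟩⟩) ?_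
      rintro rfl
      exact Equiv.Perm.mem_support.mp hm hj

/-- If the permutation `σ` of `{1,…,r}` is not the identity but has a
fixed point, then there are `i`, `j` with `σ(i) ≠ i`, `σ(j) = j` such that
`σ' = σ ∘ (i j)` (transposition applied first, i.e. `σ * Equiv.swap i j`) has one more
jump and the same number of drops as `σ`. -/
theorem exists_swap_add_jump (r : ℕ) (σ : Equiv.Perm (Fin r)) (hne : σ ≠ 1)
    (hfix : ∃ j, σ j = j) :
    ∃ i j : Fin r, σ i ≠ i ∧ σ j = j ∧
      jumps (σ * Equiv.swap i j) = jumps σ + 1 ∧ drops (σ * Equiv.swap i j) = drops σ := by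
  obtain ⟨j, hj⟩ := hfix
  obtain ⟨i, hi⟩ := exists_jump_over_or_drop_not_over hne hj
  have hσi : σ i ≠ i := by
    rcases hi with ⟨hij, hjσ⟩ | ⟨hdrop, -⟩
    exacts [(hij.trans hjσ).ne', hdrop.ne]
  have hjumps := jumps_mul_swap_eq_succ hj hi
  have hsum := jumps_add_drops (σ * Equiv.swap i j)
  rw [card_support_mul_swap hσi hj, ← jumps_add_drops σ] at hsum
  exact ⟨i, j, hσi, hj, hjumps, by omega⟩

end PermStats
end

section
/- Let σ be a permutation of {1,…,r}, let i ∈ {1,…,r} with σ(i) ≠ i, and let j ∈ {1,…,r} with σ(j) = j. Put σ' = σ ∘ (i j). If min(i, σ(i)) < j < max(i, σ(i)), then ht(σ') = ht(σ); if j < min(i, σ(i)) or j > max(i, σ(i)), then ht(σ') > ht(σ). -/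
/-!
Composing with `swap i j` changes the displacements only at `i` and `j`. Since `j` is fixed,
`ht(σ') - ht(σ) = |j - i| + |σ(i) - j| - |σ(i) - i|`, which is the defect in the triangle
inequality on the line: zero when `j` lies between `i` and `σ(i)`, positive when it lies outside.
-/

open scoped BigOperators

namespace PermStats

theorem dist_add_dist_of_min_le_of_le_max {a b c : ℕ} (h₁ : min a b ≤ c) (h₂ : c ≤ max a b) :
    Nat.dist c a + Nat.dist b c = Nat.dist b a := by
  unfold Nat.dist; omega

theorem dist_lt_dist_add_dist_of_lt_min {a b c : ℕ} (h : c < min a b) :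
    Nat.dist b a < Nat.dist c a + Nat.dist b c := by
  unfold Nat.dist; omega

theorem dist_lt_dist_add_dist_of_max_lt {a b c : ℕ} (h : max a b < c) :
    Nat.dist b a < Nat.dist c a + Nat.dist b c := by
  unfold Nat.dist; omega

theorem ht_mul_swap_add {r : ℕ} (σ : Equiv.Perm (Fin r)) (i j : Fin r) :
    ht (σ * Equiv.swap i j) + Nat.dist (σ i) i + Nat.dist (σ j) j =
      ht σ + Nat.dist (σ j) i + Nat.dist (σ i) j := by
  rcases eq_or_ne i j with rfl | hij
  · rw [Equiv.swap_self, ← Equiv.Perm.one_def, mul_one]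
  have hsplit : ∀ τ : Equiv.Perm (Fin r), ht τ =
      ∑ k ∈ {i, j}ᶜ, Nat.dist (τ k) k + (Nat.dist (τ i) i + Nat.dist (τ j) j) := by
    intro τ
    rw [ht, ← Finset.sum_compl_add_sum, Finset.sum_pair hij]
  have hrest : ∑ k ∈ {i, j}ᶜ, Nat.dist ((σ * Equiv.swap i j) k) k =
      ∑ k ∈ {i, j}ᶜ, Nat.dist (σ k) k := by
    refine Finset.sum_congr rfl fun k hk => ?_
    simp only [Finset.mem_compl, Finset.mem_insert, Finset.mem_singleton, not_or] at hk
    rw [Equiv.Perm.mul_apply, Equiv.swap_apply_of_ne_of_ne hk.1 hk.2]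
  rw [hsplit (σ * Equiv.swap i j), hsplit σ, hrest]
  simp only [Equiv.Perm.mul_apply, Equiv.swap_apply_left, Equiv.swap_apply_right]
  ring

theorem ht_swap_fixed_point_general (r : ℕ) (σ : Equiv.Perm (Fin r)) (i j : Fin r)
    (hj : σ j = j) :
    (min i (σ i) < j ∧ j < max i (σ i) → ht (σ * Equiv.swap i j) = ht σ) ∧
    (j < min i (σ i) ∨ max i (σ i) < j → ht σ < ht (σ * Equiv.swap i j)) := by
  have key := ht_mul_swap_add σ i j
  rw [hj, Nat.dist_self, add_zero] at key
  simp only [Fin.lt_def, Fin.coe_min, Fin.coe_max] at *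
  refine ⟨fun ⟨hlo, hhi⟩ => ?_, fun hout => ?_⟩
  · have := dist_add_dist_of_min_le_of_le_max hlo.le hhi.le
    omega
  · have := hout.elim dist_lt_dist_add_dist_of_lt_min dist_lt_dist_add_dist_of_max_lt
    omega

/-- Let `σ` be a permutation of `{1,…,r}`, `i` with `σ(i) ≠ i`, `j` with
`σ(j) = j`, and `σ' = σ ∘ (i j) = σ * Equiv.swap i j`.  If `min(i, σ(i)) < j < max(i, σ(i))`
then `ht(σ') = ht(σ)`; if `j < min(i, σ(i))` or `j > max(i, σ(i))` then `ht(σ') > ht(σ)`. -/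
theorem ht_swap_fixed_point (r : ℕ) (σ : Equiv.Perm (Fin r)) (i j : Fin r)
    (hi : σ i ≠ i) (hj : σ j = j) :
    (min i (σ i) < j ∧ j < max i (σ i) → ht (σ * Equiv.swap i j) = ht σ) ∧
    (j < min i (σ i) ∨ max i (σ i) < j → ht σ < ht (σ * Equiv.swap i j)) :=
  ht_swap_fixed_point_general r σ i j hj

end PermStats
end
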